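/- arXiv:1811.10382 — 2 statements merged into one kernel-verified Lean document; each statement's English description precedes it below -/
import Mathlib

section
/- Let a and a' be two families of complex coefficients indexed by (k,q) with −k_max ≤ k ≤ k_max, such that for each k there exists at least one q with a_{k,q} ≠ 0. If a_{k,q1} conj(a_{k,q2}) = a'_{k,q1} conj(a'_{k,q2}) for all k, q1, q2, and a_{k1,q1} a_{k2,q2} conj(a_{k1+k2,q3}) = a'_{k1,q1} a'_{k2,q2} conj(a'_{k1+k2,q3}) for all valid k1, k2, q1, q2, q3 (with k1+k2 in range), then there exists θ ∈ [0,2π) such that a'_{k,q} = a_{k,q} e^{-ikθ} for all k, q. -/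
open Complex Real

/-- Two families of steerable-basis coefficients with identical power spectra and bispectra,
each having a nonzero coefficient at every angular frequency `|k| ≤ kmax`, agree up to a
global rotation: `a' k q = a k q * e^{-ikθ}` for some `θ ∈ [0, 2π)`. -/
theorem power_spectrum_bispectrum_determine {Q : Type*} (kmax : ℕ) (a a' : ℤ → Q → ℂ)
    (hnz : ∀ k : ℤ, |k| ≤ (kmax : ℤ) → ∃ q : Q, a k q ≠ 0)
    (hps : ∀ k : ℤ, |k| ≤ (kmax : ℤ) → ∀ q1 q2 : Q,
      a k q1 * (starRingEnd ℂ) (a k q2) = a' k q1 * (starRingEnd ℂ) (a' k q2))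
    (hbs : ∀ k1 k2 : ℤ, |k1| ≤ (kmax : ℤ) → |k2| ≤ (kmax : ℤ) → |k1 + k2| ≤ (kmax : ℤ) →
      ∀ q1 q2 q3 : Q,
      a k1 q1 * a k2 q2 * (starRingEnd ℂ) (a (k1 + k2) q3) =
        a' k1 q1 * a' k2 q2 * (starRingEnd ℂ) (a' (k1 + k2) q3)) :
    ∃ θ ∈ Set.Ico (0 : ℝ) (2 * π), ∀ k : ℤ, |k| ≤ (kmax : ℤ) → ∀ q : Q,
      a' k q = a k q * Complex.exp (-Complex.I * (k : ℂ) * (θ : ℂ)) := by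
  classical
  have h0le : |(0:ℤ)| ≤ (kmax : ℤ) := by simp
  have hQ : Nonempty Q := ⟨(hnz 0 h0le).choose⟩
  set q0 : ℤ → Q := fun k =>
    if h : ∃ q : Q, a k q ≠ 0 then h.choose else Classical.arbitrary Q with hq0def
  have hq0 : ∀ k : ℤ, |k| ≤ (kmax : ℤ) → a k (q0 k) ≠ 0 := by
    intro k hk
    have h := hnz k hk
    simp only [hq0def, dif_pos h]
    exact h.choose_spec
  set u : ℤ → ℂ := fun k => a' k (q0 k) / a k (q0 k) with hudef
  -- a' is nonzero at q0 as well
  have hq0' : ∀ k : ℤ, |k| ≤ (kmax : ℤ) → a' k (q0 k) ≠ 0 := by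
    intro k hk h
    have h1 := hps k hk (q0 k) (q0 k)
    rw [h, map_zero, mul_zero, Complex.mul_conj] at h1
    exact hq0 k hk (Complex.normSq_eq_zero.mp (by exact_mod_cast h1))
  -- u has unit modulus
  have huu : ∀ k : ℤ, |k| ≤ (kmax : ℤ) → u k * (starRingEnd ℂ) (u k) = 1 := by
    intro k hk
    have h1 := hps k hk (q0 k) (q0 k)
    have ha := hq0 k hk
    have hac : (starRingEnd ℂ) (a k (q0 k)) ≠ 0 := by simpa using ha
    simp only [hudef, map_div₀]
    rw [div_mul_div_comm, div_eq_one_iff_eq (mul_ne_zero ha hac)]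
    exact h1.symm
  have hune : ∀ k : ℤ, |k| ≤ (kmax : ℤ) → u k ≠ 0 := by
    intro k hk h
    have := huu k hk
    rw [h, zero_mul] at this
    exact zero_ne_one this
  -- representation lemma: a' k q = u k * a k q
  have hrep : ∀ k : ℤ, |k| ≤ (kmax : ℤ) → ∀ q : Q, a' k q = u k * a k q := by
    intro k hk q
    have h1 := hps k hk q (q0 k)
    have h00 := hps k hk (q0 k) (q0 k)
    have ha := hq0 k hk
    have hc0 : (starRingEnd ℂ) (a' k (q0 k)) ≠ 0 := by simpa using hq0' k hk
    simp only [hudef]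
    rw [div_mul_eq_mul_div, eq_div_iff ha]
    apply mul_left_cancel₀ hc0
    linear_combination (a k q) * h00 - (a k (q0 k)) * h1
  -- multiplicativity of u
  have humul : ∀ k1 k2 : ℤ, |k1| ≤ (kmax : ℤ) → |k2| ≤ (kmax : ℤ) →
      |k1 + k2| ≤ (kmax : ℤ) → u (k1 + k2) = u k1 * u k2 := by
    intro k1 k2 h1 h2 h3
    have hb := hbs k1 k2 h1 h2 h3 (q0 k1) (q0 k2) (q0 (k1 + k2))
    rw [hrep k1 h1 (q0 k1), hrep k2 h2 (q0 k2), hrep (k1 + k2) h3 (q0 (k1 + k2)),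
      map_mul] at hb
    have hA1 := hq0 k1 h1
    have hA2 := hq0 k2 h2
    have hA3 : (starRingEnd ℂ) (a (k1 + k2) (q0 (k1 + k2))) ≠ 0 := by
      simpa using hq0 (k1 + k2) h3
    have key : u k1 * u k2 * (starRingEnd ℂ) (u (k1 + k2)) = 1 := by
      have hprod : a k1 (q0 k1) * a k2 (q0 k2) *
          (starRingEnd ℂ) (a (k1 + k2) (q0 (k1 + k2))) ≠ 0 :=
        mul_ne_zero (mul_ne_zero hA1 hA2) hA3
      apply mul_right_cancel₀ hprod
      rw [one_mul]
      linear_combination -hb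
    calc u (k1 + k2) = u (k1 + k2) * (u k1 * u k2 * (starRingEnd ℂ) (u (k1 + k2))) := by
          rw [key, mul_one]
      _ = u k1 * u k2 * (u (k1 + k2) * (starRingEnd ℂ) (u (k1 + k2))) := by ring
      _ = u k1 * u k2 := by rw [huu (k1 + k2) h3, mul_one]
  -- u 0 = 1
  have hu0 : u 0 = 1 := by
    have h := humul 0 0 h0le h0le (by simpa using h0le)
    rw [add_zero] at h
    have := hune 0 h0le
    field_simp at h
    exact h.symm
  -- the base phase
  set v : ℂ := if h : |(1:ℤ)| ≤ (kmax : ℤ) then u 1 else 1 with hvdef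
  have hvu : v * (starRingEnd ℂ) v = 1 := by
    by_cases h : |(1:ℤ)| ≤ (kmax : ℤ)
    · simp only [hvdef, dif_pos h]; exact huu 1 h
    · rw [hvdef, dif_neg h]; simp
  have hvne : v ≠ 0 := by
    intro h
    rw [h, zero_mul] at hvu
    exact zero_ne_one hvu
  -- u k = v ^ k for natural k
  have hpownat : ∀ n : ℕ, (n : ℤ) ≤ (kmax : ℤ) → u (n : ℤ) = v ^ n := by
    intro n
    induction n with
    | zero => intro _; simpa using hu0
    | succ m ih =>
      intro hm
      have hm' : ((m : ℤ)) ≤ (kmax : ℤ) := by push_cast at hm ⊢; omega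
      have h1le : |(1:ℤ)| ≤ (kmax : ℤ) := by rw [abs_one]; omega
      have habsm : |(m : ℤ)| ≤ (kmax : ℤ) := by
        rw [_root_.abs_of_nonneg (Int.natCast_nonneg m)]; exact hm'
      have habsm1 : |((m : ℤ) + 1)| ≤ (kmax : ℤ) := by
        rw [_root_.abs_of_nonneg (by positivity : (0:ℤ) ≤ (m:ℤ) + 1)]; omega
      have h := humul (m : ℤ) 1 habsm h1le habsm1
      have hv1 : v = u 1 := by simp only [hvdef, dif_pos h1le]
      push_cast
      rw [h, ih hm', hv1, pow_succ]
  -- u k = v ^ k for all k in range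
  have hpow : ∀ k : ℤ, |k| ≤ (kmax : ℤ) → u k = v ^ k := by
    intro k hk
    rcases le_or_gt 0 k with h | h
    · obtain ⟨n, rfl⟩ := Int.eq_ofNat_of_zero_le h
      rw [zpow_natCast]
      exact hpownat n (by rwa [_root_.abs_of_nonneg (Int.natCast_nonneg n)] at hk)
    · obtain ⟨n, rfl⟩ : ∃ n : ℕ, k = -(n : ℤ) := ⟨k.natAbs, by omega⟩
      have hn : |(n : ℤ)| ≤ (kmax : ℤ) := by rwa [abs_neg] at hk
      have hsum := humul (n : ℤ) (-(n : ℤ)) hn hk (by simpa using h0le)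
      rw [add_neg_cancel, hu0, hpownat n (by rwa [_root_.abs_of_nonneg (Int.natCast_nonneg n)] at hn)]
        at hsum
      have : u (-(n : ℤ)) = (v ^ n)⁻¹ :=
        eq_inv_of_mul_eq_one_right (by linear_combination -hsum)
      rw [this, zpow_neg, zpow_natCast]
  -- choose θ
  have hvabs : ‖v‖ = 1 := by
    have : (Complex.normSq v : ℂ) = 1 := by rw [← Complex.mul_conj]; exact hvu
    have h2 : Complex.normSq v = 1 := by exact_mod_cast this
    rw [← Complex.sq_norm] at h2
    nlinarith [norm_nonneg v]
  set φ : ℝ := Complex.arg v with hφdef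
  have hvφ : v = Complex.exp (φ * Complex.I) := by
    conv_lhs => rw [← Complex.norm_mul_exp_arg_mul_I v]
    rw [hvabs, Complex.ofReal_one, one_mul]
  set θ : ℝ := toIcoMod Real.two_pi_pos 0 (-φ) with hθdef
  have hθmem : θ ∈ Set.Ico (0 : ℝ) (2 * π) := by
    have := toIcoMod_mem_Ico Real.two_pi_pos 0 (-φ)
    simpa using this
  refine ⟨θ, hθmem, ?_⟩
  have hexpθ : Complex.exp (-Complex.I * (θ : ℂ)) = v := by
    obtain ⟨m, hm⟩ : ∃ m : ℤ, θ = -φ - m * (2 * π) := ⟨toIcoDiv Real.two_pi_pos 0 (-φ), by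
      rw [hθdef, toIcoMod, zsmul_eq_mul]⟩
    rw [hm, hvφ]
    push_cast
    rw [show -Complex.I * (-(φ:ℂ) - (m:ℂ) * (2 * (π:ℂ))) =
      (φ:ℂ) * Complex.I + (m:ℂ) * (2 * (π:ℂ)) * Complex.I by ring]
    rw [Complex.exp_add]
    have : Complex.exp ((m:ℂ) * (2 * (π:ℂ)) * Complex.I) = 1 := by
      have := Complex.exp_int_mul_two_pi_mul_I m
      convert this using 2
      push_cast; ring
    rw [this, mul_one]
  intro k hk q
  rw [hrep k hk q, hpow k hk]
  have : Complex.exp (-Complex.I * (k : ℂ) * (θ : ℂ)) = v ^ k := by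
    rw [show -Complex.I * (k : ℂ) * (θ : ℂ) = (k : ℂ) * (-Complex.I * (θ : ℂ)) by ring,
      ← hexpθ, ← Complex.exp_int_mul]
  rw [this]
  ring
end

section
/- With noisy coefficients c_{k,q} = a^π_{k,q} + ε_{k,q} as above (ε complex Gaussian with zero mean, covariance σ² I, zero pseudo-covariance, third moments zero, independent of π), the expected bispectrum satisfies E[c_{k1,q1} c_{k2,q2} conj(c_{k1+k2,q3})] = E_π[a^π_{k1,q1} a^π_{k2,q2} conj(a^π_{k1+k2,q3})] + σ² E_π[ δ_{q2,q3} δ_{k1,0} a^π_{0,q1} + δ_{q1,q3} δ_{k2,0} a^π_{0,q2} + δ_{q1,q2} δ_{k1+k2,0} a^π_{0,q3} ]. -/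
open Complex MeasureTheory

/-- For noisy coefficients `c k q = a (π ω) k q + ε k q ω`, with complex Gaussian noise of
zero mean, covariance `σ² δ_{k,k'} δ_{q,q'}`, conjugacy symmetry `ε k q = conj (ε (-k) q)`
(hence pseudo-covariance `σ² δ_{k,-k'} δ_{q,q'}`), vanishing odd moments, independent of the
random label `π`, and conjugate-symmetric true coefficients (real images), the expected
bispectrum is the mixed bispectrum plus the bias term
`σ² E_π[δ_{q2,q3} δ_{k1,0} a_{0,q1} + δ_{q1,q3} δ_{k2,0} a_{0,q2} + δ_{q1,q2} δ_{k1+k2,0} a_{0,q3}]`. -/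
theorem noisy_bispectrum_bias {Ω : Type*} [MeasurableSpace Ω] (μ : Measure Ω)
    [IsProbabilityMeasure μ] {K : ℕ} {Q : Type*} [DecidableEq Q]
    (a : Fin K → ℤ → Q → ℂ) (p : Ω → Fin K) (ε : ℤ → Q → Ω → ℂ) (σ : ℝ)
    -- conjugacy symmetry of the real images' coefficients and of the noise:
    (haconj : ∀ (i : Fin K) (k : ℤ) (q : Q), a i k q = (starRingEnd ℂ) (a i (-k) q))
    (hεconj : ∀ (k : ℤ) (q : Q) (ω : Ω), ε k q ω = (starRingEnd ℂ) (ε (-k) q ω))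
    -- zero mean noise:
    (hε1 : ∀ (k : ℤ) (q : Q), ∫ ω, ε k q ω ∂μ = 0)
    -- covariance:
    (hcov : ∀ (k k' : ℤ) (q q' : Q),
      ∫ ω, ε k q ω * (starRingEnd ℂ) (ε k' q' ω) ∂μ
        = (σ ^ 2 : ℂ) * (if k = k' then 1 else 0) * (if q = q' then 1 else 0))
    -- vanishing third moments:
    (hε3 : ∀ (k1 k2 k3 : ℤ) (q1 q2 q3 : Q),
      ∫ ω, ε k1 q1 ω * ε k2 q2 ω * ε k3 q3 ω ∂μ = 0)
    -- independence of the label π from products of at most three noise entries: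
    (hind : ∀ (g : Fin K → ℂ) (l : List (ℤ × Q)), l.length ≤ 3 →
      ∫ ω, g (p ω) * (l.map fun kq => ε kq.1 kq.2 ω).prod ∂μ
        = (∫ ω, g (p ω) ∂μ) * ∫ ω, (l.map fun kq => ε kq.1 kq.2 ω).prod ∂μ)
    -- integrability of the relevant products:
    (hInt : ∀ (g : Fin K → ℂ) (l : List (ℤ × Q)), l.length ≤ 3 →
      Integrable (fun ω => g (p ω) * (l.map fun kq => ε kq.1 kq.2 ω).prod) μ) :
    ∀ (k1 k2 : ℤ) (q1 q2 q3 : Q),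
      ∫ ω, (a (p ω) k1 q1 + ε k1 q1 ω) * (a (p ω) k2 q2 + ε k2 q2 ω)
          * (starRingEnd ℂ) (a (p ω) (k1 + k2) q3 + ε (k1 + k2) q3 ω) ∂μ
        = (∫ ω, a (p ω) k1 q1 * a (p ω) k2 q2 * (starRingEnd ℂ) (a (p ω) (k1 + k2) q3) ∂μ)
          + (σ ^ 2 : ℂ) *
            ∫ ω, (if q2 = q3 then 1 else 0) * (if k1 = 0 then 1 else 0) * a (p ω) 0 q1
              + (if q1 = q3 then 1 else 0) * (if k2 = 0 then 1 else 0) * a (p ω) 0 q2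
              + (if q1 = q2 then 1 else 0) * (if k1 + k2 = 0 then 1 else 0) * a (p ω) 0 q3 ∂μ := by
  intro k1 k2 q1 q2 q3
  set k3 : ℤ := -(k1 + k2) with hk3
  -- conjugation rewrites
  have hac : ∀ (i : Fin K), (starRingEnd ℂ) (a i (k1 + k2) q3) = a i k3 q3 := by
    intro i
    have := haconj i k3 q3
    rw [this, hk3, neg_neg]
  have hec : ∀ ω, (starRingEnd ℂ) (ε (k1 + k2) q3 ω) = ε k3 q3 ω := by
    intro ω
    have := hεconj k3 q3 ω
    rw [this, hk3, neg_neg]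
  -- pairwise noise integrals
  have hpair : ∀ (k k' : ℤ) (q q' : Q), ∫ ω, ε k q ω * ε k' q' ω ∂μ
      = (σ ^ 2 : ℂ) * (if k = -k' then 1 else 0) * (if q = q' then 1 else 0) := by
    intro k k' q q'
    have h1 : ∀ ω, ε k q ω * ε k' q' ω = ε k q ω * (starRingEnd ℂ) (ε (-k') q' ω) := by
      intro ω; rw [← hεconj]
    simp_rw [h1]
    exact hcov k (-k') q q'
  -- specialized integrability
  have hIa : ∀ (g : Fin K → ℂ), Integrable (fun ω => g (p ω)) μ := by
    intro g; simpa using hInt g [] (by simp)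
  have hI1 : ∀ (g : Fin K → ℂ) (k : ℤ) (q : Q),
      Integrable (fun ω => g (p ω) * ε k q ω) μ := by
    intro g k q; simpa using hInt g [(k, q)] (by simp)
  have hI2 : ∀ (g : Fin K → ℂ) (k k' : ℤ) (q q' : Q),
      Integrable (fun ω => g (p ω) * (ε k q ω * ε k' q' ω)) μ := by
    intro g k k' q q'; simpa using hInt g [(k, q), (k', q')] (by simp)
  have hI3 : Integrable (fun ω => ε k1 q1 ω * (ε k2 q2 ω * ε k3 q3 ω)) μ := by
    simpa using hInt (fun _ => 1) [(k1, q1), (k2, q2), (k3, q3)] (by simp)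
  -- specialized independence
  have hE1 : ∀ (g : Fin K → ℂ) (k : ℤ) (q : Q),
      ∫ ω, g (p ω) * ε k q ω ∂μ = (∫ ω, g (p ω) ∂μ) * ∫ ω, ε k q ω ∂μ := by
    intro g k q; simpa using hind g [(k, q)] (by simp)
  have hE2 : ∀ (g : Fin K → ℂ) (k k' : ℤ) (q q' : Q),
      ∫ ω, g (p ω) * (ε k q ω * ε k' q' ω) ∂μ
        = (∫ ω, g (p ω) ∂μ) * ∫ ω, ε k q ω * ε k' q' ω ∂μ := by
    intro g k k' q q'; simpa using hind g [(k, q), (k', q')] (by simp)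
  -- the eight pieces
  set g1 : Fin K → ℂ := fun i => a i k1 q1 * a i k2 q2 * a i k3 q3 with hg1
  set g2 : Fin K → ℂ := fun i => a i k1 q1 * a i k2 q2 with hg2
  set g3 : Fin K → ℂ := fun i => a i k1 q1 * a i k3 q3 with hg3
  set g5 : Fin K → ℂ := fun i => a i k2 q2 * a i k3 q3 with hg5
  have hdecomp : (fun ω => (a (p ω) k1 q1 + ε k1 q1 ω) * (a (p ω) k2 q2 + ε k2 q2 ω)
      * (starRingEnd ℂ) (a (p ω) (k1 + k2) q3 + ε (k1 + k2) q3 ω))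
      = fun ω => g1 (p ω)
        + (g2 (p ω) * ε k3 q3 ω
        + (g3 (p ω) * ε k2 q2 ω
        + ((fun i => a i k1 q1) (p ω) * (ε k2 q2 ω * ε k3 q3 ω)
        + (g5 (p ω) * ε k1 q1 ω
        + ((fun i => a i k2 q2) (p ω) * (ε k1 q1 ω * ε k3 q3 ω)
        + ((fun i => a i k3 q3) (p ω) * (ε k1 q1 ω * ε k2 q2 ω)
        + ε k1 q1 ω * (ε k2 q2 ω * ε k3 q3 ω))))))) := by
    funext ω
    rw [map_add, hac, hec, hg1, hg2, hg3, hg5]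
    ring
  rw [hdecomp]
  have J8 := hI3
  have J7 : Integrable (fun ω => (fun i => a i k3 q3) (p ω) * (ε k1 q1 ω * ε k2 q2 ω)
      + ε k1 q1 ω * (ε k2 q2 ω * ε k3 q3 ω)) μ :=
    (hI2 (fun i => a i k3 q3) k1 k2 q1 q2).add J8
  have J6 : Integrable (fun ω => (fun i => a i k2 q2) (p ω) * (ε k1 q1 ω * ε k3 q3 ω)
      + ((fun i => a i k3 q3) (p ω) * (ε k1 q1 ω * ε k2 q2 ω)
      + ε k1 q1 ω * (ε k2 q2 ω * ε k3 q3 ω))) μ :=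
    (hI2 (fun i => a i k2 q2) k1 k3 q1 q3).add J7
  have J5 : Integrable (fun ω => g5 (p ω) * ε k1 q1 ω
      + ((fun i => a i k2 q2) (p ω) * (ε k1 q1 ω * ε k3 q3 ω)
      + ((fun i => a i k3 q3) (p ω) * (ε k1 q1 ω * ε k2 q2 ω)
      + ε k1 q1 ω * (ε k2 q2 ω * ε k3 q3 ω)))) μ :=
    (hI1 g5 k1 q1).add J6
  have J4 : Integrable (fun ω => (fun i => a i k1 q1) (p ω) * (ε k2 q2 ω * ε k3 q3 ω)
      + (g5 (p ω) * ε k1 q1 ω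
      + ((fun i => a i k2 q2) (p ω) * (ε k1 q1 ω * ε k3 q3 ω)
      + ((fun i => a i k3 q3) (p ω) * (ε k1 q1 ω * ε k2 q2 ω)
      + ε k1 q1 ω * (ε k2 q2 ω * ε k3 q3 ω))))) μ :=
    (hI2 (fun i => a i k1 q1) k2 k3 q2 q3).add J5
  have J3 : Integrable (fun ω => g3 (p ω) * ε k2 q2 ω
      + ((fun i => a i k1 q1) (p ω) * (ε k2 q2 ω * ε k3 q3 ω)
      + (g5 (p ω) * ε k1 q1 ω
      + ((fun i => a i k2 q2) (p ω) * (ε k1 q1 ω * ε k3 q3 ω)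
      + ((fun i => a i k3 q3) (p ω) * (ε k1 q1 ω * ε k2 q2 ω)
      + ε k1 q1 ω * (ε k2 q2 ω * ε k3 q3 ω)))))) μ :=
    (hI1 g3 k2 q2).add J4
  have J2 : Integrable (fun ω => g2 (p ω) * ε k3 q3 ω
      + (g3 (p ω) * ε k2 q2 ω
      + ((fun i => a i k1 q1) (p ω) * (ε k2 q2 ω * ε k3 q3 ω)
      + (g5 (p ω) * ε k1 q1 ω
      + ((fun i => a i k2 q2) (p ω) * (ε k1 q1 ω * ε k3 q3 ω)
      + ((fun i => a i k3 q3) (p ω) * (ε k1 q1 ω * ε k2 q2 ω)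
      + ε k1 q1 ω * (ε k2 q2 ω * ε k3 q3 ω))))))) μ :=
    (hI1 g2 k3 q3).add J3
  rw [integral_add (hIa g1) J2,
    integral_add (hI1 g2 k3 q3) J3,
    integral_add (hI1 g3 k2 q2) J4,
    integral_add (hI2 (fun i => a i k1 q1) k2 k3 q2 q3) J5,
    integral_add (hI1 g5 k1 q1) J6,
    integral_add (hI2 (fun i => a i k2 q2) k1 k3 q1 q3) J7,
    integral_add (hI2 (fun i => a i k3 q3) k1 k2 q1 q2) J8]
  -- evaluate each piece
  rw [hE1 g2 k3 q3, hε1 k3 q3, mul_zero]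
  rw [hE1 g3 k2 q2, hε1 k2 q2, mul_zero]
  rw [hE1 g5 k1 q1, hε1 k1 q1, mul_zero]
  have e4 : ∫ ω, a (p ω) k1 q1 * (ε k2 q2 ω * ε k3 q3 ω) ∂μ
      = (∫ ω, a (p ω) k1 q1 ∂μ) * ∫ ω, ε k2 q2 ω * ε k3 q3 ω ∂μ :=
    hE2 (fun i => a i k1 q1) k2 k3 q2 q3
  have e6 : ∫ ω, a (p ω) k2 q2 * (ε k1 q1 ω * ε k3 q3 ω) ∂μ
      = (∫ ω, a (p ω) k2 q2 ∂μ) * ∫ ω, ε k1 q1 ω * ε k3 q3 ω ∂μ :=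
    hE2 (fun i => a i k2 q2) k1 k3 q1 q3
  have e7 : ∫ ω, a (p ω) k3 q3 * (ε k1 q1 ω * ε k2 q2 ω) ∂μ
      = (∫ ω, a (p ω) k3 q3 ∂μ) * ∫ ω, ε k1 q1 ω * ε k2 q2 ω ∂μ :=
    hE2 (fun i => a i k3 q3) k1 k2 q1 q2
  rw [e4, hpair k2 k3 q2 q3]
  rw [e6, hpair k1 k3 q1 q3]
  rw [e7, hpair k1 k2 q1 q2]
  have h8 : ∫ ω, ε k1 q1 ω * (ε k2 q2 ω * ε k3 q3 ω) ∂μ = 0 := by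
    simp_rw [← mul_assoc]; exact hε3 k1 k2 k3 q1 q2 q3
  rw [h8]
  -- rewrite the target's first term
  have hfirst : (∫ ω, a (p ω) k1 q1 * a (p ω) k2 q2
      * (starRingEnd ℂ) (a (p ω) (k1 + k2) q3) ∂μ) = ∫ ω, g1 (p ω) ∂μ := by
    apply integral_congr_ae; filter_upwards with ω; rw [hac]
  rw [hfirst]
  -- split the RHS bias integral
  have hbias : (∫ ω, (if q2 = q3 then 1 else 0) * (if k1 = 0 then 1 else 0) * a (p ω) 0 q1
      + (if q1 = q3 then 1 else 0) * (if k2 = 0 then 1 else 0) * a (p ω) 0 q2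
      + (if q1 = q2 then 1 else 0) * (if k1 + k2 = 0 then 1 else 0) * a (p ω) 0 q3 ∂μ)
      = (if q2 = q3 then 1 else 0) * (if k1 = 0 then 1 else 0) * (∫ ω, a (p ω) 0 q1 ∂μ)
      + (if q1 = q3 then 1 else 0) * (if k2 = 0 then 1 else 0) * (∫ ω, a (p ω) 0 q2 ∂μ)
      + (if q1 = q2 then 1 else 0) * (if k1 + k2 = 0 then 1 else 0)
          * (∫ ω, a (p ω) 0 q3 ∂μ) := by
    have hb1 : Integrable (fun ω => (if q2 = q3 then (1:ℂ) else 0) * (if k1 = 0 then 1 else 0)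
        * a (p ω) 0 q1) μ := by
      simpa [mul_assoc] using ((hIa (fun i => a i 0 q1)).const_mul
        ((if q2 = q3 then (1:ℂ) else 0) * (if k1 = 0 then 1 else 0)))
    have hb2 : Integrable (fun ω => (if q1 = q3 then (1:ℂ) else 0) * (if k2 = 0 then 1 else 0)
        * a (p ω) 0 q2) μ := by
      simpa [mul_assoc] using ((hIa (fun i => a i 0 q2)).const_mul
        ((if q1 = q3 then (1:ℂ) else 0) * (if k2 = 0 then 1 else 0)))
    have hb3 : Integrable (fun ω => (if q1 = q2 then (1:ℂ) else 0) * (if k1 + k2 = 0 then 1 else 0)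
        * a (p ω) 0 q3) μ := by
      simpa [mul_assoc] using ((hIa (fun i => a i 0 q3)).const_mul
        ((if q1 = q2 then (1:ℂ) else 0) * (if k1 + k2 = 0 then 1 else 0)))
    have hb23 : Integrable (fun ω => (if q1 = q3 then (1:ℂ) else 0) * (if k2 = 0 then 1 else 0)
        * a (p ω) 0 q2 + (if q1 = q2 then (1:ℂ) else 0) * (if k1 + k2 = 0 then 1 else 0)
        * a (p ω) 0 q3) μ := hb2.add hb3
    have hb12 : Integrable (fun ω => (if q2 = q3 then (1:ℂ) else 0) * (if k1 = 0 then 1 else 0)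
        * a (p ω) 0 q1 + (if q1 = q3 then (1:ℂ) else 0) * (if k2 = 0 then 1 else 0)
        * a (p ω) 0 q2) μ := hb1.add hb2
    rw [integral_add hb12 hb3, integral_add hb1 hb2]
    simp_rw [mul_assoc, integral_const_mul]
  rw [hbias]
  -- match the bias terms
  have ht1 : (∫ ω, a (p ω) k1 q1 ∂μ)
        * ((σ ^ 2 : ℂ) * (if k2 = -k3 then 1 else 0) * (if q2 = q3 then 1 else 0))
      = (σ ^ 2 : ℂ) * ((if q2 = q3 then 1 else 0) * (if k1 = 0 then 1 else 0)
        * (∫ ω, a (p ω) 0 q1 ∂μ)) := by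
    by_cases h : k1 = 0
    · have h2 : k2 = -k3 := by omega
      simp only [h, h2, if_pos rfl]
      ring
    · have h2 : ¬ k2 = -k3 := fun hc => h (by omega)
      simp [h, h2]
  have ht2 : (∫ ω, a (p ω) k2 q2 ∂μ)
        * ((σ ^ 2 : ℂ) * (if k1 = -k3 then 1 else 0) * (if q1 = q3 then 1 else 0))
      = (σ ^ 2 : ℂ) * ((if q1 = q3 then 1 else 0) * (if k2 = 0 then 1 else 0)
        * (∫ ω, a (p ω) 0 q2 ∂μ)) := by
    by_cases h : k2 = 0
    · have h2 : k1 = -k3 := by omega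
      simp only [h, h2, if_pos rfl]
      ring
    · have h2 : ¬ k1 = -k3 := fun hc => h (by omega)
      simp [h, h2]
  have ht3 : (∫ ω, a (p ω) k3 q3 ∂μ)
        * ((σ ^ 2 : ℂ) * (if k1 = -k2 then 1 else 0) * (if q1 = q2 then 1 else 0))
      = (σ ^ 2 : ℂ) * ((if q1 = q2 then 1 else 0) * (if k1 + k2 = 0 then 1 else 0)
        * (∫ ω, a (p ω) 0 q3 ∂μ)) := by
    by_cases h : k1 + k2 = 0
    · have h2 : k1 = -k2 := by omega
      have h3 : k3 = 0 := by omega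
      simp only [h, h2, h3, if_pos rfl]
      ring
    · have h2 : ¬ k1 = -k2 := fun hc => h (by omega)
      simp [h, h2]
  rw [ht1, ht2, ht3]
  ring
end
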